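/- arXiv:2210.05970 — 4 statements merged into one kernel-verified Lean document; each statement's English description precedes it below -/
import Mathlib

section
/- Let all parameters be positive constants, ε ∈ [0,1), β > 0, M_T ≥ 0, r ∈ (0,1), and N = rφγ/((γ+μ_{A,1})μ_F). A positive value A is the aquatic component of a nonzero equilibrium of the SIT system (with sterile male level M_T) if and only if P(A) = 0, where P(A) = ((1−r)γ/μ_M)·A² − (M* − βM_T)·A + βM_T·((γ+μ_{A,1})/μ_{A,2})·(1 − εN), with M* = Q(N−1) and Q = (1−r)γ(γ+μ_{A,1})/(μ_{A,2}μ_M). -/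
/-!
Write `M = (1 - r) γ A / μM`. Since `r φ γ = N (γ + μA1) μF`, the aquatic balance
`φ F - (γ + μA1 + μA2 A) A` equals `-(μA2 A / (M + β MT)) P(A)`, and the prefactor does not
vanish for `A > 0`. The balances for `M` and `F` hold identically once `M` and `F` are given by
their equilibrium formulas.
-/

theorem aquatic_balance_eq_mul_quadratic {φ γ μA1 μA2 μM μF r N Q ε β MT A M : ℝ}
    (hγμA1 : γ + μA1 ≠ 0) (hμA2 : μA2 ≠ 0) (hμM : μM ≠ 0) (hμF : μF ≠ 0)
    (hM : M * μM = (1 - r) * γ * A) (hD : M + β * MT ≠ 0)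
    (hN : N = r * φ * γ / ((γ + μA1) * μF))
    (hQ : Q = (1 - r) * γ * (γ + μA1) / (μA2 * μM)) :
    φ * (r * γ * A * (M + ε * β * MT) / ((M + β * MT) * μF)) - (γ + μA1 + μA2 * A) * A =
      -(μA2 * A / (M + β * MT)) *
        (((1 - r) * γ / μM) * A ^ 2 - (Q * (N - 1) - β * MT) * A
          + β * MT * ((γ + μA1) / μA2) * (1 - ε * N)) := by
  subst hN hQ
  field_simp
  linear_combination A * (φ * r * γ - (γ + μA1 + μA2 * A) * μF) * hM

theorem stmt3_general (φ γ μA1 μA2 μM μF r N Q ε β MT A : ℝ)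
    (hγ : 0 < γ) (hμA1 : 0 < μA1) (hμA2 : 0 < μA2)
    (hμM : 0 < μM) (hμF : 0 < μF) (hr1 : r < 1)
    (hβ : 0 < β) (hMT : 0 ≤ MT)
    (hN : N = r * φ * γ / ((γ + μA1) * μF))
    (hQ : Q = (1 - r) * γ * (γ + μA1) / (μA2 * μM))
    (hA : 0 < A) :
    (let M := (1 - r) * γ * A / μM
     let F := r * γ * A * (M + ε * β * MT) / ((M + β * MT) * μF)
     φ * F - (γ + μA1 + μA2 * A) * A = 0 ∧
     (1 - r) * γ * A - μM * M = 0 ∧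
     r * γ * ((M + ε * β * MT) / (M + β * MT)) * A - μF * F = 0) ↔
    ((1 - r) * γ / μM) * A ^ 2 - (Q * (N - 1) - β * MT) * A
      + β * MT * ((γ + μA1) / μA2) * (1 - ε * N) = 0 := by
  dsimp only
  have hM : 0 < (1 - r) * γ * A / μM := by
    have := sub_pos.mpr hr1
    positivity
  have hD : (1 - r) * γ * A / μM + β * MT ≠ 0 := by positivity
  rw [and_iff_left ⟨by rw [mul_div_cancel₀ _ hμM.ne', sub_self], by field_simp; ring⟩,
    aquatic_balance_eq_mul_quadratic (by positivity) hμA2.ne' hμM.ne' hμF.ne'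
      (div_mul_cancel₀ _ hμM.ne') hD hN hQ,
    neg_mul, neg_eq_zero, mul_eq_zero, or_iff_right (by positivity)]

theorem stmt3 (φ γ μA1 μA2 μM μF r N Q ε β MT A : ℝ)
    (hφ : 0 < φ) (hγ : 0 < γ) (hμA1 : 0 < μA1) (hμA2 : 0 < μA2)
    (hμM : 0 < μM) (hμF : 0 < μF) (hr0 : 0 < r) (hr1 : r < 1)
    (hε0 : 0 ≤ ε) (hε1 : ε < 1) (hβ : 0 < β) (hMT : 0 ≤ MT)
    (hN : N = r * φ * γ / ((γ + μA1) * μF))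
    (hQ : Q = (1 - r) * γ * (γ + μA1) / (μA2 * μM))
    (hA : 0 < A) :
    (let M := (1 - r) * γ * A / μM
     let F := r * γ * A * (M + ε * β * MT) / ((M + β * MT) * μF)
     φ * F - (γ + μA1 + μA2 * A) * A = 0 ∧
     (1 - r) * γ * A - μM * M = 0 ∧
     r * γ * ((M + ε * β * MT) / (M + β * MT)) * A - μF * F = 0) ↔
    ((1 - r) * γ / μM) * A ^ 2 - (Q * (N - 1) - β * MT) * A
      + β * MT * ((γ + μA1) / μA2) * (1 - ε * N) = 0 :=
  stmt3_general φ γ μA1 μA2 μM μF r N Q ε β MT A hγ hμA1 hμA2 hμM hμF hr1 hβ hMT hN hQ hA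
end

section
/- Assume Q > 0, N > 1 + 2/√3, 0 < ε < 1/N, β > 0, and 0 < βM_T < βM_{T₁,ε} := Q(N + 1 − 2εN − 2√((1−εN)(1−ε)N)). Then Q(N−1) − βM_T > 0; i.e., the sum of the two roots A_{1,ε} + A_{2,ε} of the equilibrium quadratic is strictly positive. -/
theorem stmt9 (Q N ε β MT : ℝ)
    (hQ : 0 < Q) (hN : 1 + 2 / Real.sqrt 3 < N)
    (hε0 : 0 < ε) (hε : ε < 1 / N) (hβ : 0 < β)
    (hMT0 : 0 < β * MT)
    (hMT1 : β * MT
      < Q * (N + 1 - 2 * ε * N - 2 * Real.sqrt ((1 - ε * N) * (1 - ε) * N))) :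
    0 < Q * (N - 1) - β * MT := by
  have hs3 : 0 < Real.sqrt 3 := Real.sqrt_pos.mpr (by norm_num)
  have hN1 : 1 < N := by
    have : 0 < 2 / Real.sqrt 3 := by positivity
    linarith
  have hNpos : 0 < N := by linarith
  have hεN : ε * N < 1 := (lt_div_iff₀ hNpos).mp hε
  have h1 : 0 ≤ 1 - ε * N := by linarith
  have hS : (1 - ε * N) ^ 2 < (1 - ε * N) * (1 - ε) * N := by
    nlinarith [hεN, hN1, hε0]
  have hsqrt : 1 - ε * N < Real.sqrt ((1 - ε * N) * (1 - ε) * N) := by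
    exact (Real.lt_sqrt h1).mpr hS
  nlinarith [hMT1, hQ, hsqrt]
end

section
/- Assume Q > 0, N > 1 + 2/√3, 0 < ε < 1/N, β > 0, and 0 < βM_T < βM_{T₁,ε} = Q(N + 1 − 2εN − 2√((1−εN)(1−ε)N)). Then the discriminant Δ(ε) = (Q(N−1) − βM_T)² − 4Q·βM_T·(1−εN) is strictly positive, and the quadratic ((1−r)γ/μ_M)A² − (Q(N−1) − βM_T)A + βM_T((γ+μ_{A,1})/μ_{A,2})(1−εN) has two distinct real roots A_{1,ε} < A_{2,ε} which are both strictly positive. -/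
/-!
Viewed as a quadratic in `y = βM_T`, the discriminant factors as
`Δ(ε) = (Q(N + 1 - 2εN - 2s) - y) (Q(N + 1 - 2εN + 2s) - y)` with `s = √((1 - εN)(1 - ε)N)`,
so it is positive below the smaller root `βM_{T₁,ε}`. Since `s ≥ 1 - εN`, that root is at most
`Q(N - 1)`, so the linear coefficient `Q(N - 1) - βM_T` of the quadratic in `A` is positive; its
constant term is positive too, hence both of its roots are positive.
-/

theorem exists_two_pos_roots_of_discrim_pos {a b c : ℝ} (ha : 0 < a) (hb : 0 < b) (hc : 0 < c)
    (hΔ : 0 < b ^ 2 - 4 * a * c) :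
    ∃ x₁ x₂ : ℝ, x₁ < x₂ ∧ 0 < x₁ ∧ 0 < x₂ ∧
      a * x₁ ^ 2 - b * x₁ + c = 0 ∧ a * x₂ ^ 2 - b * x₂ + c = 0 := by
  set s := √(b ^ 2 - 4 * a * c)
  have hs2 : s ^ 2 = b ^ 2 - 4 * a * c := Real.sq_sqrt hΔ.le
  have hs0 : 0 < s := Real.sqrt_pos.2 hΔ
  have hsb : s < b := (Real.sqrt_lt' hb).2 (by nlinarith [mul_pos ha hc])
  refine ⟨(b - s) / (2 * a), (b + s) / (2 * a), ?_, ?_, ?_, ?_, ?_⟩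
  · gcongr; linarith
  · exact div_pos (by linarith) (by linarith)
  · exact div_pos (by linarith) (by linarith)
  · field_simp; linear_combination hs2
  · field_simp; linear_combination hs2

theorem discr_eq_mul_sub_roots (Q N ε y s : ℝ) (hs : s ^ 2 = (1 - ε * N) * (1 - ε) * N) :
    (Q * (N - 1) - y) ^ 2 - 4 * Q * y * (1 - ε * N)
      = (Q * (N + 1 - 2 * ε * N - 2 * s) - y) * (Q * (N + 1 - 2 * ε * N + 2 * s) - y) := by
  linear_combination 4 * Q ^ 2 * hs

theorem one_sub_mul_le_sqrt {N ε : ℝ} (hN : 1 ≤ N) (hεN : ε * N < 1) :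
    1 - ε * N ≤ √((1 - ε * N) * (1 - ε) * N) := by
  have h : 0 ≤ 1 - ε * N := by linarith
  rw [Real.le_sqrt h (by nlinarith), sq, mul_assoc]
  exact mul_le_mul_of_nonneg_left (by linarith) h

theorem stmt10_general (r γ μM μA1 μA2 Q N ε β MT : ℝ)
    (hr1 : r < 1) (hγ : 0 < γ) (hμM : 0 < μM)
    (hμA1 : 0 < μA1) (hμA2 : 0 < μA2)
    (hQ : Q = (1 - r) * γ * (γ + μA1) / (μA2 * μM))
    (hN : 1 + 2 / Real.sqrt 3 < N)
    (hε : ε < 1 / N)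
    (hMT0 : 0 < β * MT)
    (hMT1 : β * MT
      < Q * (N + 1 - 2 * ε * N - 2 * Real.sqrt ((1 - ε * N) * (1 - ε) * N))) :
    0 < (Q * (N - 1) - β * MT) ^ 2 - 4 * Q * (β * MT) * (1 - ε * N) ∧
    ∃ A₁ A₂ : ℝ, A₁ < A₂ ∧ 0 < A₁ ∧ 0 < A₂ ∧
      ((1 - r) * γ / μM) * A₁ ^ 2 - (Q * (N - 1) - β * MT) * A₁
        + β * MT * ((γ + μA1) / μA2) * (1 - ε * N) = 0 ∧
      ((1 - r) * γ / μM) * A₂ ^ 2 - (Q * (N - 1) - β * MT) * A₂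
        + β * MT * ((γ + μA1) / μA2) * (1 - ε * N) = 0 := by
  have hN1 : 1 ≤ N := by linarith [show 0 < 2 / √3 by positivity]
  have hεN : ε * N < 1 := (lt_div_iff₀ (by linarith)).1 hε
  have hr : 0 < 1 - r := by linarith
  have hQ0 : 0 < Q := by rw [hQ]; positivity
  set s := √((1 - ε * N) * (1 - ε) * N)
  have hs : 1 - ε * N ≤ s := one_sub_mul_le_sqrt hN1 hεN
  have hΔ : 0 < (Q * (N - 1) - β * MT) ^ 2 - 4 * Q * (β * MT) * (1 - ε * N) := by
    rw [discr_eq_mul_sub_roots Q N ε _ s (Real.sq_sqrt (by nlinarith))]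
    exact mul_pos (by linarith) (by nlinarith)
  have hb : 0 < Q * (N - 1) - β * MT := by nlinarith
  refine ⟨hΔ, exists_two_pos_roots_of_discrim_pos (by positivity) hb
    (mul_pos (mul_pos hMT0 (by positivity)) (by linarith)) ?_⟩
  convert hΔ using 2
  rw [hQ]; field_simp

theorem stmt10 (r γ μM μA1 μA2 Q N ε β MT : ℝ)
    (hr0 : 0 < r) (hr1 : r < 1) (hγ : 0 < γ) (hμM : 0 < μM)
    (hμA1 : 0 < μA1) (hμA2 : 0 < μA2)
    (hQ : Q = (1 - r) * γ * (γ + μA1) / (μA2 * μM))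
    (hN : 1 + 2 / Real.sqrt 3 < N)
    (hε0 : 0 < ε) (hε : ε < 1 / N) (hβ : 0 < β)
    (hMT0 : 0 < β * MT)
    (hMT1 : β * MT
      < Q * (N + 1 - 2 * ε * N - 2 * Real.sqrt ((1 - ε * N) * (1 - ε) * N))) :
    0 < (Q * (N - 1) - β * MT) ^ 2 - 4 * Q * (β * MT) * (1 - ε * N) ∧
    ∃ A₁ A₂ : ℝ, A₁ < A₂ ∧ 0 < A₁ ∧ 0 < A₂ ∧
      ((1 - r) * γ / μM) * A₁ ^ 2 - (Q * (N - 1) - β * MT) * A₁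
        + β * MT * ((γ + μA1) / μA2) * (1 - ε * N) = 0 ∧
      ((1 - r) * γ / μM) * A₂ ^ 2 - (Q * (N - 1) - β * MT) * A₂
        + β * MT * ((γ + μA1) / μA2) * (1 - ε * N) = 0 :=
  stmt10_general r γ μM μA1 μA2 Q N ε β MT hr1 hγ hμM hμA1 hμA2 hQ hN hε hMT0 hMT1
end

section
/- Let ε ∈ (1/N, 1), N > 1, Q > 0. Then the infimum over y > 0 of Q(N−1) − y + √((Q(N−1)−y)² + 4Qy(εN−1)) equals 2Q(εN−1); that is, for every y > 0 the expression Q(N−1) − y + √((Q(N−1)−y)² + 4Qy(εN−1)) is strictly greater than 2Q(εN−1), and it tends to 2Q(εN−1) as y → ∞. -/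
theorem stmt13 (Q N ε : ℝ)
    (hQ : 0 < Q) (hN : 1 < N) (hε : 1 / N < ε) (hε1 : ε < 1) :
    (∀ y : ℝ, 0 < y →
      2 * Q * (ε * N - 1)
        < Q * (N - 1) - y
          + Real.sqrt ((Q * (N - 1) - y) ^ 2 + 4 * Q * y * (ε * N - 1))) ∧
    Filter.Tendsto
      (fun y : ℝ => Q * (N - 1) - y
          + Real.sqrt ((Q * (N - 1) - y) ^ 2 + 4 * Q * y * (ε * N - 1)))
      Filter.atTop (nhds (2 * Q * (ε * N - 1))) := by
  have hN0 : (0:ℝ) < N := by linarith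
  have hεN : 0 < ε * N - 1 := by
    rw [div_lt_iff₀ hN0] at hε
    linarith
  have hd : 0 < Q * (ε * N - 1) := mul_pos hQ hεN
  have hcd : Q * (ε * N - 1) < Q * (N - 1) :=
    mul_lt_mul_of_pos_left (by nlinarith : ε * N - 1 < N - 1) hQ
  set c := Q * (N - 1) with hc
  set d := Q * (ε * N - 1) with hdd
  have part1 : ∀ y : ℝ, 0 < y →
      2 * Q * (ε * N - 1) < c - y + Real.sqrt ((c - y) ^ 2 + 4 * Q * y * (ε * N - 1)) := by
    intro y hy
    have hin : 0 ≤ (c - y) ^ 2 + 4 * Q * y * (ε * N - 1) := by nlinarith [sq_nonneg (c - y)]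
    have hs := Real.sq_sqrt hin
    set s := Real.sqrt ((c - y) ^ 2 + 4 * Q * y * (ε * N - 1)) with hsdef
    have hs0 : 0 ≤ s := Real.sqrt_nonneg _
    -- s^2 = (y - c + 2d)^2 + 4d(c-d), so s > y - c + 2d
    nlinarith [sq_nonneg (s + (y - c + 2 * d)), sq_nonneg (s - (y - c + 2 * d)),
      mul_pos hd (sub_pos.mpr hcd)]
  refine ⟨part1, ?_⟩
  set K := 8 * d * (c - d) with hK
  have hK0 : 0 ≤ K := by nlinarith
  have hupper : Filter.Tendsto (fun y : ℝ => 2 * Q * (ε * N - 1) + K / y)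
      Filter.atTop (nhds (2 * Q * (ε * N - 1))) := by
    have h0 : Filter.Tendsto (fun y : ℝ => K / y) Filter.atTop (nhds 0) :=
      Filter.Tendsto.div_atTop tendsto_const_nhds Filter.tendsto_id
    simpa using tendsto_const_nhds.add h0
  refine tendsto_of_tendsto_of_tendsto_of_le_of_le' (tendsto_const_nhds) hupper ?_ ?_
  · filter_upwards [Filter.eventually_gt_atTop (0:ℝ)] with y hy
    exact (part1 y hy).le
  · filter_upwards [Filter.eventually_ge_atTop (max 1 (2 * c))] with y hy
    have hy1 : (1:ℝ) ≤ y := le_trans (le_max_left _ _) hy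
    have hy2 : 2 * c ≤ y := le_trans (le_max_right _ _) hy
    have hy0 : 0 < y := lt_of_lt_of_le one_pos hy1
    set t := y - c + 2 * d with ht
    have ht0 : 0 < t := by nlinarith
    have hB : K / y * y = K := div_mul_cancel₀ K (ne_of_gt hy0)
    have hB0 : 0 ≤ K / y := div_nonneg hK0 hy0.le
    have hst : Real.sqrt ((c - y) ^ 2 + 4 * Q * y * (ε * N - 1)) ≤ t + K / y := by
      rw [show t + K / y = Real.sqrt ((t + K / y) ^ 2) from
        (Real.sqrt_sq (by positivity)).symm]
      apply Real.sqrt_le_sqrt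
      -- (c-y)^2 + 4dy = t^2 + 4d(c-d) ≤ (t + K/y)^2
      nlinarith [mul_nonneg hB0 (by nlinarith : (0:ℝ) ≤ t - y / 2), sq_nonneg (K / y)]
    have : c - y + Real.sqrt ((c - y) ^ 2 + 4 * Q * y * (ε * N - 1)) ≤ c - y + (t + K / y) :=
      by linarith
    calc c - y + Real.sqrt ((c - y) ^ 2 + 4 * Q * y * (ε * N - 1))
        ≤ c - y + (t + K / y) := this
      _ = 2 * Q * (ε * N - 1) + K / y := by rw [ht, hdd]; ring
end
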